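/- There exists C > 0 such that for every real σ ≥ 0, integer p ≥ 0, and all functions v ∈ H^{σ+1+p}(T), f ∈ L²(T), one has ‖[H; v]∂_x^p f‖_{H^σ(T)} ≤ C ‖∂_x^p v‖_{H^{σ+1}(T)} ‖f‖_{L²(T)}. -/

import Mathlib

open scoped Real

noncomputable section

/-- The Japanese-bracket power `⟨k⟩ˢ = (1 + |k|²)^{s/2}`. -/
def japow (k : ℤ) (s : ℝ) : ℝ := (1 + (k : ℝ) ^ 2) ^ (s / 2)

/-- The squared `Hˢ(𝕋)` norm of a periodic function described by its sequence of
Fourier coefficients `c`: `‖f‖²_{Hˢ} = 2π·Σ_k ⟨k⟩^{2s}|f^(k)|²`. -/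
def hsNormSq (s : ℝ) (c : ℤ → ℂ) : ℝ := 2 * Real.pi * ∑' k : ℤ, japow k (2 * s) * ‖c k‖ ^ 2

/-- The `Hˢ(𝕋)` norm in terms of Fourier coefficients. -/
def hsNorm (s : ℝ) (c : ℤ → ℂ) : ℝ := Real.sqrt (hsNormSq s c)

/-- Membership in the Sobolev space `Hˢ(𝕋)`, in terms of Fourier coefficients. -/
def MemHs (s : ℝ) (c : ℤ → ℂ) : Prop := Summable fun k : ℤ => japow k (2 * s) * ‖c k‖ ^ 2

/-- The discrete Hilbert transform on the Fourier side: `(H[f])^(k) = -i·sgn(k)·f^(k)`. -/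
def hilbC (c : ℤ → ℂ) : ℤ → ℂ := fun k => -Complex.I * (Int.sign k : ℤ) * c k

/-- The `x`-derivative on the Fourier side: `(∂ₓf)^(k) = i·k·f^(k)`. -/
def derC (c : ℤ → ℂ) : ℤ → ℂ := fun k => Complex.I * (k : ℂ) * c k

/-- The pointwise product of two periodic functions on the Fourier side
(discrete convolution of the coefficients). -/
def convC (a b : ℤ → ℂ) : ℤ → ℂ := fun k => ∑' ℓ : ℤ, a (k - ℓ) * b ℓ

/-- The commutator `[H; v]f = H[v·f] - v·H[f]` on the Fourier side. -/
def commH (v f : ℤ → ℂ) : ℤ → ℂ := fun k => hilbC (convC v f) k - convC v (hilbC f) k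

/-!
On the Fourier side `([H; v]g)^(k) = -i Σ_ℓ (sgn k - sgn ℓ) v^(k - ℓ) g^(ℓ)`, so only pairs with
`sgn k ≠ sgn ℓ` contribute, and for those both `|k|` and `|ℓ|` are at most `|k - ℓ|`. Hence the
weight `⟨k⟩^σ` and the factor `|ℓ|^p` produced by `∂ₓ^p f` can be moved onto `v^(k - ℓ)`, i.e. onto
`∂ₓ^p v`. Writing `⟨m⟩^σ = ⟨m⟩^(-1) ⟨m⟩^(σ+1)`, Cauchy–Schwarz in `ℓ` and summation over `k` bound
`‖[H; v]∂ₓ^p f‖²_{H^σ}` by a multiple of `(Σ_m ⟨m⟩^(-2)) ‖∂ₓ^p v‖²_{H^(σ+1)} ‖f‖²_{L²}`.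
-/

open scoped ENNReal

open MeasureTheory in
theorem ENNReal.sq_tsum_mul_le {ι : Type*} (x y : ι → ℝ≥0∞) :
    (∑' i, x i * y i) ^ 2 ≤ (∑' i, x i ^ 2) * ∑' i, y i ^ 2 := by
  let _ : MeasurableSpace ι := ⊤
  have h := ENNReal.lintegral_mul_le_Lp_mul_Lq Measure.count Real.HolderConjugate.two_two
    measurable_from_top.aemeasurable measurable_from_top.aemeasurable (f := x) (g := y)
  simp only [lintegral_count, Pi.mul_apply, ENNReal.rpow_two] at h
  calc (∑' i, x i * y i) ^ 2
      ≤ ((∑' i, x i ^ 2) ^ (1 / 2 : ℝ) * (∑' i, y i ^ 2) ^ (1 / 2 : ℝ)) ^ 2 := by gcongr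
    _ = _ := by
      rw [mul_pow, ← ENNReal.rpow_mul_natCast, ← ENNReal.rpow_mul_natCast]
      norm_num

theorem ENNReal.tsum_sq_tsum_mul_le {G : Type*} [AddGroup G] (w a b : G → ℝ≥0∞) :
    ∑' k, (∑' l, w (k - l) * a (k - l) * b l) ^ 2 ≤
      (∑' m, w m ^ 2) * (∑' m, a m ^ 2) * ∑' l, b l ^ 2 := by
  have shift_left (k : G) : ∑' l, a (k - l) ^ 2 = ∑' m, a m ^ 2 :=
    (Equiv.subLeft k).tsum_eq fun m => a m ^ 2
  have shift_right (l : G) : ∑' k, w (k - l) ^ 2 = ∑' m, w m ^ 2 :=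
    (Equiv.subRight l).tsum_eq fun m => w m ^ 2
  calc ∑' k, (∑' l, w (k - l) * a (k - l) * b l) ^ 2
      = ∑' k, (∑' l, (w (k - l) * b l) * a (k - l)) ^ 2 := by
        simp_rw [mul_right_comm (w _)]
    _ ≤ ∑' k, (∑' l, (w (k - l) * b l) ^ 2) * ∑' l, a (k - l) ^ 2 :=
        ENNReal.tsum_le_tsum fun k => ENNReal.sq_tsum_mul_le _ _
    _ = (∑' l, (∑' k, w (k - l) ^ 2) * b l ^ 2) * ∑' m, a m ^ 2 := by
        simp_rw [shift_left, ENNReal.tsum_mul_right, mul_pow]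
        rw [ENNReal.tsum_comm]
        simp_rw [ENNReal.tsum_mul_right]
    _ = _ := by
        simp_rw [shift_right, ENNReal.tsum_mul_left]
        ring

lemma japow_nonneg (k : ℤ) (s : ℝ) : 0 ≤ japow k s := by unfold japow; positivity

lemma japow_zero_right (k : ℤ) : japow k 0 = 1 := by simp [japow]

lemma japow_zero_left (s : ℝ) : japow 0 s = 1 := by simp [japow]

lemma japow_add (k : ℤ) (s t : ℝ) : japow k (s + t) = japow k s * japow k t := by
  rw [japow, add_div, Real.rpow_add (by positivity)]
  rfl

lemma japow_two_mul (k : ℤ) (s : ℝ) : japow k (2 * s) = japow k s ^ 2 := by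
  rw [two_mul, japow_add, sq]

lemma japow_le_japow {k m : ℤ} {s : ℝ} (hs : 0 ≤ s) (h : |k| ≤ |m|) : japow k s ≤ japow m s := by
  have : (k : ℝ) ^ 2 ≤ (m : ℝ) ^ 2 := sq_le_sq.mpr (by exact_mod_cast h)
  unfold japow
  gcongr

lemma abs_pow_le_japow (m : ℤ) (p : ℕ) : |(m : ℝ)| ^ p ≤ japow m p := by
  have : |(m : ℝ)| ^ p = ((m : ℝ) ^ 2) ^ ((p : ℝ) / 2) := by
    rw [← sq_abs, ← Real.rpow_natCast, ← Real.rpow_natCast, ← Real.rpow_mul (abs_nonneg _)]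
    ring_nf
  rw [this, japow]
  gcongr
  linarith

lemma summable_japow_neg_two : Summable fun m : ℤ => japow m (-2) := by
  refine .of_norm_bounded_eventually (Real.summable_one_div_int_pow.mpr one_lt_two) ?_
  filter_upwards [Filter.eventually_cofinite_ne 0] with m hm
  rw [Real.norm_of_nonneg (japow_nonneg _ _), japow, show (-2 : ℝ) / 2 = -1 by norm_num,
    Real.rpow_neg_one, ← one_div]
  have : (m : ℝ) ≠ 0 := by exact_mod_cast hm
  have : (0 : ℝ) < (m : ℝ) ^ 2 := by positivity
  gcongr
  linarith

lemma Int.abs_le_abs_sub_of_sign_ne {k l : ℤ} (h : k.sign ≠ l.sign) :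
    |k| ≤ |k - l| ∧ |l| ≤ |k - l| := by
  have hkl : k * l ≤ 0 := by
    by_contra! hpos
    rcases mul_pos_iff.mp hpos with ⟨hk, hl⟩ | ⟨hk, hl⟩ <;>
      simp [Int.sign_eq_one_of_pos, Int.sign_eq_neg_one_of_neg, *] at h
  exact ⟨sq_le_sq.mp (by nlinarith), sq_le_sq.mp (by nlinarith)⟩

lemma Int.abs_sign_sub_sign_le_two (k l : ℤ) : |k.sign - l.sign| ≤ 2 := by
  rcases k.sign_trichotomy with h | h | h <;> rcases l.sign_trichotomy with h' | h' | h' <;>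
    simp [h, h']

lemma derC_iterate_apply (p : ℕ) (c : ℤ → ℂ) (k : ℤ) :
    derC^[p] c k = (Complex.I * k) ^ p * c k := by
  induction p generalizing c with
  | zero => simp
  | succ p ih =>
    rw [Function.iterate_succ_apply, ih, derC, pow_succ]
    ring

lemma summable_mul_hilbC_iff (a g : ℤ → ℂ) :
    Summable (fun l => a l * hilbC g l) ↔ Summable (fun l => a l * g l) := by
  rw [← summable_norm_iff, ← summable_norm_iff (f := fun l => a l * g l)]
  refine summable_congr_cofinite ?_
  filter_upwards [Filter.eventually_cofinite_ne 0] with l hl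
  simp [hilbC, ← Int.cast_abs, Int.abs_sign_of_ne_zero hl]

lemma commH_eq_tsum {v g : ℤ → ℂ} {k : ℤ} (hs : Summable fun l => v (k - l) * g l) :
    commH v g k = ∑' l, -Complex.I * ((k.sign - l.sign : ℤ) : ℂ) * (v (k - l) * g l) := by
  have hs' := (summable_mul_hilbC_iff (fun l => v (k - l)) g).mpr hs
  rw [commH, hilbC, convC, convC, ← tsum_mul_left, ← (hs.mul_left _).tsum_sub hs']
  refine tsum_congr fun l => ?_
  simp only [hilbC]
  push_cast
  ring

lemma commH_eq_zero_of_not_summable {v g : ℤ → ℂ} {k : ℤ}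
    (hs : ¬Summable fun l => v (k - l) * g l) : commH v g k = 0 := by
  have hs' := mt (summable_mul_hilbC_iff (fun l => v (k - l)) g).mp hs
  simp only [hilbC] at hs'
  simp only [commH, hilbC, convC, tsum_eq_zero_of_not_summable hs,
    tsum_eq_zero_of_not_summable hs', mul_zero, sub_zero]

lemma enorm_commH_le (v g : ℤ → ℂ) (k : ℤ) :
    ‖commH v g k‖ₑ ≤ ∑' l, ‖((k.sign - l.sign : ℤ) : ℂ)‖ₑ * (‖v (k - l)‖ₑ * ‖g l‖ₑ) := by
  by_cases hs : Summable fun l => v (k - l) * g l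
  · rw [commH_eq_tsum hs]
    refine enorm_tsum_le_tsum_enorm.trans_eq (tsum_congr fun l => ?_)
    rw [enorm_mul, enorm_mul, enorm_neg, ← ofReal_norm, Complex.norm_I, ENNReal.ofReal_one, one_mul,
      enorm_mul]
  · simp [commH_eq_zero_of_not_summable hs]

lemma japow_mul_enorm_sign_sub_mul_le {σ : ℝ} (hσ : 0 ≤ σ) (p : ℕ) (v f : ℤ → ℂ) (k l : ℤ) :
    ENNReal.ofReal (japow k σ) *
        (‖((k.sign - l.sign : ℤ) : ℂ)‖ₑ * (‖v (k - l)‖ₑ * ‖derC^[p] f l‖ₑ)) ≤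
      2 * (ENNReal.ofReal (japow (k - l) σ) * ‖derC^[p] v (k - l)‖ₑ * ‖f l‖ₑ) := by
  by_cases hkl : k.sign = l.sign
  · simp [hkl]
  obtain ⟨hk, hl⟩ := Int.abs_le_abs_sub_of_sign_ne hkl
  have hsign : ‖((k.sign - l.sign : ℤ) : ℂ)‖ₑ ≤ 2 := by
    rw [← ofReal_norm, Complex.norm_intCast]
    calc ENNReal.ofReal _ ≤ ENNReal.ofReal 2 :=
          ENNReal.ofReal_le_ofReal (by exact_mod_cast Int.abs_sign_sub_sign_le_two k l)
      _ = 2 := by norm_num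
  have hweight : ENNReal.ofReal (japow k σ) ≤ ENNReal.ofReal (japow (k - l) σ) :=
    ENNReal.ofReal_le_ofReal (japow_le_japow hσ hk)
  have hfreq : ‖Complex.I * l‖ₑ ≤ ‖Complex.I * ((k - l : ℤ) : ℂ)‖ₑ := by
    rw [enorm_le_iff_norm_le]
    simp only [norm_mul, Complex.norm_I, one_mul, Complex.norm_intCast]
    exact_mod_cast hl
  rw [derC_iterate_apply, derC_iterate_apply, enorm_mul, enorm_mul, enorm_pow, enorm_pow]
  calc _ ≤ ENNReal.ofReal (japow (k - l) σ) *
        (2 * (‖v (k - l)‖ₑ * (‖Complex.I * ((k - l : ℤ) : ℂ)‖ₑ ^ p * ‖f l‖ₑ))) := by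
        gcongr
    _ = _ := by ring

lemma japow_mul_enorm_commH_le {σ : ℝ} (hσ : 0 ≤ σ) (p : ℕ) (v f : ℤ → ℂ) (k : ℤ) :
    ENNReal.ofReal (japow k σ) * ‖commH v (derC^[p] f) k‖ₑ ≤
      2 * ∑' l, ENNReal.ofReal (japow (k - l) (-1)) *
        (ENNReal.ofReal (japow (k - l) (σ + 1)) * ‖derC^[p] v (k - l)‖ₑ) * ‖f l‖ₑ := by
  have hsplit (m : ℤ) : ENNReal.ofReal (japow m σ) =
      ENNReal.ofReal (japow m (-1)) * ENNReal.ofReal (japow m (σ + 1)) := by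
    rw [← ENNReal.ofReal_mul (japow_nonneg _ _), ← japow_add, neg_add_cancel_comm_assoc]
  calc _ ≤ ENNReal.ofReal (japow k σ) *
        ∑' l, ‖((k.sign - l.sign : ℤ) : ℂ)‖ₑ * (‖v (k - l)‖ₑ * ‖derC^[p] f l‖ₑ) := by
        gcongr
        exact enorm_commH_le _ _ _
    _ ≤ ∑' l, 2 * (ENNReal.ofReal (japow (k - l) σ) * ‖derC^[p] v (k - l)‖ₑ * ‖f l‖ₑ) := by
        rw [← ENNReal.tsum_mul_left]
        exact ENNReal.tsum_le_tsum fun l => japow_mul_enorm_sign_sub_mul_le hσ p v f k l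
    _ = _ := by simp_rw [ENNReal.tsum_mul_left, hsplit, mul_assoc]

/-- `hsNormSq s c / (2π)` as an `ℝ≥0∞`-valued sum, which needs no summability assumption. -/
def hsENormSq (s : ℝ) (c : ℤ → ℂ) : ℝ≥0∞ := ∑' k, (ENNReal.ofReal (japow k s) * ‖c k‖ₑ) ^ 2

lemma sq_ofReal_japow_mul_enorm (k : ℤ) (s : ℝ) (z : ℂ) :
    (ENNReal.ofReal (japow k s) * ‖z‖ₑ) ^ 2 = ENNReal.ofReal (japow k (2 * s) * ‖z‖ ^ 2) := by
  rw [← ofReal_norm, ← ENNReal.ofReal_mul (japow_nonneg _ _), ← ENNReal.ofReal_pow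
    (mul_nonneg (japow_nonneg _ _) (norm_nonneg _)), mul_pow, japow_two_mul]

lemma hsNormSq_eq_toReal_hsENormSq (s : ℝ) (c : ℤ → ℂ) :
    hsNormSq s c = 2 * π * (hsENormSq s c).toReal := by
  simp_rw [hsNormSq, hsENormSq, sq_ofReal_japow_mul_enorm,
    ENNReal.tsum_toReal_eq fun _ => ENNReal.ofReal_ne_top]
  congr 1
  exact tsum_congr fun k =>
    (ENNReal.toReal_ofReal (mul_nonneg (japow_nonneg _ _) (sq_nonneg _))).symm

lemma MemHs.hsENormSq_ne_top {s : ℝ} {c : ℤ → ℂ} (h : MemHs s c) : hsENormSq s c ≠ ⊤ := by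
  simp_rw [hsENormSq, sq_ofReal_japow_mul_enorm]
  rw [← ENNReal.ofReal_tsum_of_nonneg (fun k => mul_nonneg (japow_nonneg _ _) (sq_nonneg _)) h]
  exact ENNReal.ofReal_ne_top

lemma hsENormSq_derC_iterate_le (s : ℝ) (p : ℕ) (c : ℤ → ℂ) :
    hsENormSq s (derC^[p] c) ≤ hsENormSq (s + p) c := by
  refine ENNReal.tsum_le_tsum fun k => ?_
  have hfreq : ‖Complex.I * k‖ₑ ^ p ≤ ENNReal.ofReal (japow k p) := by
    rw [← ofReal_norm, ← ENNReal.ofReal_pow (norm_nonneg _)]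
    exact ENNReal.ofReal_le_ofReal (by simpa using abs_pow_le_japow k p)
  rw [derC_iterate_apply, enorm_mul, enorm_pow, japow_add, ENNReal.ofReal_mul (japow_nonneg _ _)]
  calc (ENNReal.ofReal (japow k s) * (‖Complex.I * k‖ₑ ^ p * ‖c k‖ₑ)) ^ 2
      ≤ (ENNReal.ofReal (japow k s) * (ENNReal.ofReal (japow k p) * ‖c k‖ₑ)) ^ 2 := by gcongr
    _ = _ := by ring

lemma hsNorm_le_of_hsENormSq_le {s t u : ℝ} {a b c : ℤ → ℂ} {M : ℝ≥0∞} (hM : M ≠ ⊤)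
    (hb : hsENormSq t b ≠ ⊤) (hc : hsENormSq u c ≠ ⊤)
    (h : hsENormSq s a ≤ M * hsENormSq t b * hsENormSq u c) :
    hsNorm s a ≤ √(M.toReal / (2 * π)) * hsNorm t b * hsNorm u c := by
  have h' := ENNReal.toReal_mono (ENNReal.mul_ne_top (ENNReal.mul_ne_top hM hb) hc) h
  rw [ENNReal.toReal_mul, ENNReal.toReal_mul] at h'
  simp only [hsNorm, hsNormSq_eq_toReal_hsENormSq]
  rw [← Real.sqrt_mul (by positivity), ← Real.sqrt_mul (by positivity)]
  apply Real.sqrt_le_sqrt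
  calc 2 * π * (hsENormSq s a).toReal
      ≤ 2 * π * (M.toReal * (hsENormSq t b).toReal * (hsENormSq u c).toReal) := by gcongr
    _ = _ := by field_simp

lemma tsum_ofReal_japow_neg_two_ne_top : ∑' m : ℤ, ENNReal.ofReal (japow m (-2)) ≠ ⊤ := by
  rw [← ENNReal.ofReal_tsum_of_nonneg (fun m => japow_nonneg _ _) summable_japow_neg_two]
  exact ENNReal.ofReal_ne_top

lemma one_le_tsum_ofReal_japow_neg_two : 1 ≤ ∑' m : ℤ, ENNReal.ofReal (japow m (-2)) := by
  simpa [japow_zero_left] using ENNReal.le_tsum (f := fun m : ℤ => ENNReal.ofReal (japow m (-2))) 0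

theorem hsENormSq_commH_derC_iterate_le {σ : ℝ} (hσ : 0 ≤ σ) (p : ℕ) (v f : ℤ → ℂ) :
    hsENormSq σ (commH v (derC^[p] f)) ≤
      4 * (∑' m : ℤ, ENNReal.ofReal (japow m (-2))) * hsENormSq (σ + 1) (derC^[p] v) *
        hsENormSq 0 f := by
  have hweight (m : ℤ) : ENNReal.ofReal (japow m (-1)) ^ 2 = ENNReal.ofReal (japow m (-2)) := by
    rw [← ENNReal.ofReal_pow (japow_nonneg _ _), ← japow_two_mul]
    norm_num
  calc hsENormSq σ (commH v (derC^[p] f))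
      ≤ ∑' k, (2 * ∑' l, ENNReal.ofReal (japow (k - l) (-1)) *
          (ENNReal.ofReal (japow (k - l) (σ + 1)) * ‖derC^[p] v (k - l)‖ₑ) * ‖f l‖ₑ) ^ 2 :=
        ENNReal.tsum_le_tsum fun k =>
          pow_le_pow_left₀ zero_le (japow_mul_enorm_commH_le hσ p v f k) 2
    _ ≤ 4 * ((∑' m : ℤ, ENNReal.ofReal (japow m (-1)) ^ 2) *
          hsENormSq (σ + 1) (derC^[p] v) * ∑' l, ‖f l‖ₑ ^ 2) := by
        simp_rw [mul_pow (2 : ℝ≥0∞), ENNReal.tsum_mul_left]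
        rw [show (2 : ℝ≥0∞) ^ 2 = 4 by norm_num]
        gcongr
        exact ENNReal.tsum_sq_tsum_mul_le _ _ _
    _ = _ := by simp [hsENormSq, hweight, japow_zero_right, mul_assoc]

/-- There is a constant `C > 0` such that for every real `σ ≥ 0`, every
natural `p`, and all `v ∈ H^(σ+1+p)`, `f ∈ L²`:
`‖[H; v]∂ₓ^p f‖_{H^σ} ≤ C * ‖∂ₓ^p v‖_{H^(σ+1)} * ‖f‖_{L²}`. -/
theorem stmt_11 :
    ∃ C > (0 : ℝ), ∀ (σ : ℝ), 0 ≤ σ → ∀ (p : ℕ) (v f : ℤ → ℂ),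
      MemHs (σ + 1 + p) v → MemHs 0 f →
      hsNorm σ (commH v (derC^[p] f)) ≤ C * hsNorm (σ + 1) (derC^[p] v) * hsNorm 0 f := by
  set K := ∑' m : ℤ, ENNReal.ofReal (japow m (-2))
  have hK : 4 * K ≠ ⊤ := ENNReal.mul_ne_top (by norm_num) tsum_ofReal_japow_neg_two_ne_top
  have hK_pos : 0 < (4 * K).toReal :=
    ENNReal.toReal_pos (mul_ne_zero (by norm_num)
      (zero_lt_one.trans_le one_le_tsum_ofReal_japow_neg_two).ne') hK
  refine ⟨√((4 * K).toReal / (2 * π)), by positivity, fun σ hσ p v f hv hf => ?_⟩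
  exact hsNorm_le_of_hsENormSq_le hK
    (ne_top_of_le_ne_top hv.hsENormSq_ne_top (hsENormSq_derC_iterate_le _ _ _))
    hf.hsENormSq_ne_top (hsENormSq_commH_derC_iterate_le hσ p v f)
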